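/- arXiv:1903.01795 — 5 statements merged into one kernel-verified Lean document; each statement's English description precedes it below -/
import Mathlib

section
/- Let f(Z) = 2Z + A + (b/π)sin(2πZ) with A ∈ ℂ, b > 0, and let Γ: [0,1) → ℂ be a continuous path with Im Γ(t) → +∞ as t → 1. Then f∘Γ(t) does not converge to a finite limit in ℂ as t → 1. -/
/-!
Write `x = Re Γ`, `y = Im Γ` and suppose `f ∘ Γ → L`. Since `‖sin w‖ ≥ sinh (Im w)`, the bounded
quantity `f(Γ) - 2Γ - A` forces `2|x| ≥ (b/π) sinh (2πy) - 2y - O(1)`, so `|x| → ∞` along the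
path. By continuity `x` then crosses `ℤ + 1/4` arbitrarily close to `t = 1`; there `sin (2πΓ)`
equals `cosh (2πy)`, which is real, so `Im f(Γ) = 2y + Im A → ∞`, contradicting `Im f(Γ) → Im L`.
-/

open Filter Topology

namespace Complex

theorem sinh_im_le_norm_sin (z : ℂ) : Real.sinh z.im ≤ ‖sin z‖ := by
  have h : ‖sin z‖ = ‖exp (-z * I) - exp (z * I)‖ / 2 := by simp [sin]
  rw [h, Real.sinh_eq]
  gcongr
  simpa [norm_exp] using norm_sub_norm_le (exp (-z * I)) (exp (z * I))

theorem sin_im (z : ℂ) : (sin z).im = Real.cos z.re * Real.sinh z.im := by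
  rw [sin_eq]
  simp [← ofReal_sin, ← ofReal_cos, ← ofReal_sinh, ← ofReal_cosh]

end Complex

namespace Real

theorem sq_div_four_le_sinh {v : ℝ} (hv : 0 ≤ v) : v ^ 2 / 4 ≤ sinh v := by
  have hexp := quadratic_le_exp_of_nonneg hv
  have hexp_neg : exp (-v) ≤ 1 := exp_le_one_iff.mpr (by linarith)
  rw [sinh_eq]
  nlinarith

theorem tendsto_mul_sinh_mul_sub_atTop {a k : ℝ} (ha : 0 < a) (hk : 0 < k) (c : ℝ) :
    Tendsto (fun y => a * sinh (k * y) - c * y) atTop atTop := by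
  have hquad : Tendsto (fun y => y * (a * k ^ 2 / 4 * y - c)) atTop atTop :=
    tendsto_id.atTop_mul_atTop₀ <|
      tendsto_atTop_add_const_right _ _ (tendsto_id.const_mul_atTop (by positivity))
  refine tendsto_atTop_mono' _ ?_ hquad
  filter_upwards [eventually_ge_atTop 0] with y hy
  have hsinh := sq_div_four_le_sinh (mul_nonneg hk.le hy)
  nlinarith

theorem exists_int_add_mem_Icc {p q : ℝ} (h : p + 1 ≤ q) (c : ℝ) :
    ∃ n : ℤ, (n : ℝ) + c ∈ Set.Icc p q :=
  ⟨⌈p - c⌉, by linarith [Int.le_ceil (p - c)], by linarith [Int.ceil_lt_add_one (p - c)]⟩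

end Real

theorem frequently_eq_int_add_of_tendsto_abs_atTop {g : ℝ → ℝ} {a b : ℝ} (hab : a < b)
    (hg : ContinuousOn g (Set.Ico a b)) (hlim : Tendsto (fun t => |g t|) (𝓝[<] b) atTop)
    (c : ℝ) : ∃ᶠ t in 𝓝[<] b, ∃ n : ℤ, g t = n + c := by
  rw [frequently_iff]
  intro U hU
  obtain ⟨u, hub, huU⟩ := mem_nhdsLT_iff_exists_Ioo_subset.mp hU
  obtain ⟨t₁, ht₁, ht₁b⟩ := exists_between (max_lt hub hab)
  obtain ⟨t₂, hgt₂, ht₁₂, ht₂b⟩ :=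
    ((hlim.eventually_ge_atTop (|g t₁| + 1)).and (Ioo_mem_nhdsLT ht₁b)).exists
  have hgap : min (g t₁) (g t₂) + 1 ≤ max (g t₁) (g t₂) := by
    linarith [max_sub_min_eq_abs' (g t₁) (g t₂), abs_sub_abs_le_abs_sub (g t₂) (g t₁),
      abs_sub_comm (g t₁) (g t₂)]
  obtain ⟨n, hn⟩ := Real.exists_int_add_mem_Icc hgap c
  have hsub : Set.Icc t₁ t₂ ⊆ Set.Ioo u b ∩ Set.Ico a b := fun t ht =>
    ⟨⟨by linarith [le_max_left u a, ht.1], by linarith [ht.2]⟩,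
      ⟨by linarith [le_max_right u a, ht.1], by linarith [ht.2]⟩⟩
  rw [← Set.uIcc_of_le ht₁₂.le] at hsub
  obtain ⟨t, ht, hgt⟩ := intermediate_value_uIcc (hg.mono fun t ht => (hsub ht).2) hn
  exact ⟨t, huU (hsub ht).1, n, hgt⟩

noncomputable def sineMap (A : ℂ) (b : ℝ) (z : ℂ) : ℂ :=
  2 * z + A + ((b : ℂ) / Real.pi) * Complex.sin (2 * Real.pi * z)

theorem im_sineMap_of_re_eq_int_add_quarter (A : ℂ) (b : ℝ) {z : ℂ} {n : ℤ}
    (hz : z.re = n + 1 / 4) : (sineMap A b z).im = 2 * z.im + A.im := by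
  have hcos : Real.cos (2 * Real.pi * z.re) = 0 := by
    rw [hz, show 2 * Real.pi * (n + 1 / 4) = Real.pi / 2 + n * (2 * Real.pi) by ring,
      Real.cos_add_int_mul_two_pi, Real.cos_pi_div_two]
  simp [sineMap, Complex.sin_im, hcos]

theorem abs_mul_sinh_le_norm_sineMap (A : ℂ) (b : ℝ) (z : ℂ) :
    |b| / Real.pi * Real.sinh (2 * Real.pi * z.im) ≤
      ‖sineMap A b z‖ + ‖A‖ + 2 * (|z.re| + |z.im|) := by
  have hsin := Complex.sinh_im_le_norm_sin (2 * Real.pi * z)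
  have hcoef : ‖(b : ℂ) / Real.pi‖ = |b| / Real.pi := by
    simp [abs_of_pos Real.pi_pos]
  calc |b| / Real.pi * Real.sinh (2 * Real.pi * z.im)
      ≤ ‖(b : ℂ) / Real.pi * Complex.sin (2 * Real.pi * z)‖ := by
        rw [norm_mul, hcoef]
        gcongr
        simpa using hsin
    _ = ‖sineMap A b z - 2 * z - A‖ := by simp only [sineMap]; ring_nf
    _ ≤ ‖sineMap A b z‖ + ‖(2 : ℂ) * z‖ + ‖A‖ :=
        (norm_sub_le _ _).trans (by gcongr; exact norm_sub_le _ _)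
    _ ≤ ‖sineMap A b z‖ + ‖A‖ + 2 * (|z.re| + |z.im|) := by
        rw [norm_mul, Complex.norm_ofNat]
        linarith [Complex.norm_le_abs_re_add_abs_im z]

theorem tendsto_abs_re_of_tendsto_sineMap {α : Type*} {l : Filter α} {A L : ℂ} {b : ℝ}
    (hb : b ≠ 0) {Γ : α → ℂ} (hIm : Tendsto (fun t => (Γ t).im) l atTop)
    (hf : Tendsto (fun t => sineMap A b (Γ t)) l (𝓝 L)) :
    Tendsto (fun t => |(Γ t).re|) l atTop := by
  have hbound : ∀ᶠ t in l, ‖sineMap A b (Γ t)‖ ≤ ‖L‖ + 1 :=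
    hf.norm.eventually (eventually_le_nhds (lt_add_one _))
  have hgrow : Tendsto (fun t => (|b| / Real.pi * Real.sinh (2 * Real.pi * (Γ t).im)
      - 2 * (Γ t).im - (‖L‖ + 1 + ‖A‖)) / 2) l atTop :=
    (tendsto_atTop_add_const_right _ _ ((Real.tendsto_mul_sinh_mul_sub_atTop
      (by positivity) Real.two_pi_pos 2).comp hIm)).atTop_div_const two_pos
  refine tendsto_atTop_mono' l ?_ hgrow
  filter_upwards [hbound, hIm.eventually_ge_atTop 0] with t hFt hyt
  have hsinh := abs_mul_sinh_le_norm_sineMap A b (Γ t)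
  rw [abs_of_nonneg hyt] at hsinh
  rw [div_le_iff₀ two_pos]
  linarith

/-- Let `f(Z) = 2Z + A + (b/π) sin(2πZ)` with `A ∈ ℂ`, `b > 0`, and let
`Γ : [0,1) → ℂ` be a continuous path with `Im Γ(t) → +∞` as `t → 1`. Then
`f ∘ Γ` has no finite limit as `t → 1`. -/
theorem no_finite_asymptotic_value (A : ℂ) (b : ℝ) (hb : 0 < b)
    (Γ : ℝ → ℂ) (hΓ : ContinuousOn Γ (Set.Ico 0 1))
    (hIm : Tendsto (fun t => (Γ t).im) (𝓝[Set.Iio 1] 1) atTop) :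
    ¬ ∃ L : ℂ, Tendsto
      (fun t => 2 * Γ t + A + ((b : ℂ) / Real.pi) * Complex.sin (2 * Real.pi * Γ t))
      (𝓝[Set.Iio 1] 1) (𝓝 L) := by
  rintro ⟨L, hf⟩
  change Tendsto (fun t => sineMap A b (Γ t)) _ _ at hf
  have hquarter : ∃ᶠ t in 𝓝[<] 1, ∃ n : ℤ, (Γ t).re = n + 1 / 4 :=
    frequently_eq_int_add_of_tendsto_abs_atTop zero_lt_one
      (Complex.continuous_re.comp_continuousOn hΓ)
      (tendsto_abs_re_of_tendsto_sineMap hb.ne' hIm hf) _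
  have hgap : Tendsto (fun t => 2 * (Γ t).im + (A.im - (sineMap A b (Γ t)).im))
      (𝓝[<] 1) atTop :=
    (hIm.const_mul_atTop two_pos).atTop_add
      (tendsto_const_nhds.sub ((Complex.continuous_im.tendsto L).comp hf))
  obtain ⟨t, ⟨n, hn⟩, hpos⟩ := (hquarter.and_eventually (hgap.eventually_gt_atTop 0)).exists
  rw [im_sineMap_of_re_eq_int_add_quarter A b hn] at hpos
  linarith
end

section
/- Let f: U → V be a degree-d covering map of punctured disks U = Û∖{x}, V = V̂∖{y} ramifying at x (so in suitable coordinates f(z) = z^d), and let q be a quadratic differential meromorphic at x. Then the pushforward f_*q (sum of pullbacks over inverse branches) extends meromorphically to y and satisfies 2 + ord_y(f_*q) ≥ (2 + ord_x q)/d. -/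
open Filter Topology Finset

/-!
Pull the pushforward back along `z ↦ z ^ d`. The pullback `Q (z ^ d) (d z ^ (d - 1))²` equals
`z ^ (d m + 2 (d - 1))` times a function that does not vanish at `0`, while the sum over the deck
transformations is `z ^ n` times a function continuous at `0` (which may vanish there, through
cancellation between the branches). Comparing the two orders gives `n ≤ d m + 2 (d - 1)`.
-/

section PuncturedOrder

variable {𝕜 : Type*} [NontriviallyNormedField 𝕜]

theorem tendsto_pow_nhdsNE_zero {d : ℕ} (hd : d ≠ 0) :
    Tendsto (fun z : 𝕜 => z ^ d) (𝓝[≠] 0) (𝓝[≠] 0) := by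
  simpa [zero_pow hd] using (continuous_pow d).continuousWithinAt.tendsto_nhdsWithin (x := 0)
    (s := {(0 : 𝕜)}ᶜ) (t := {0}ᶜ) fun z hz => pow_ne_zero d hz

theorem tendsto_const_mul_nhdsNE_zero {c : 𝕜} (hc : c ≠ 0) :
    Tendsto (fun z : 𝕜 => c * z) (𝓝[≠] 0) (𝓝[≠] 0) := by
  simpa using (continuous_const_mul c).continuousWithinAt.tendsto_nhdsWithin (x := 0)
    (s := {(0 : 𝕜)}ᶜ) (t := {0}ᶜ) fun z hz => mul_ne_zero hc hz

theorem le_of_eventually_zpow_mul_eq {a b : 𝕜 → 𝕜} {k n : ℤ} (ha : ContinuousAt a 0)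
    (ha0 : a 0 ≠ 0) (hb : ContinuousAt b 0)
    (h : ∀ᶠ z in 𝓝[≠] 0, z ^ k * a z = z ^ n * b z) : n ≤ k := by
  by_contra! hkn
  obtain ⟨p, hp⟩ : ∃ p : ℕ, n = k + (p + 1 : ℕ) := ⟨(n - k - 1).toNat, by omega⟩
  have hab : ∀ᶠ z in 𝓝[≠] 0, a z = z ^ (p + 1) * b z := by
    filter_upwards [h, self_mem_nhdsWithin] with z hz hz0
    refine mul_left_cancel₀ (zpow_ne_zero k hz0) ?_
    rw [hz, hp, zpow_add₀ hz0, zpow_natCast, mul_assoc]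
  have hlim : Tendsto (fun z => z ^ (p + 1) * b z) (𝓝[≠] 0) (𝓝 (a 0)) :=
    (ha.tendsto.mono_left nhdsWithin_le_nhds).congr' hab
  have hzero : Tendsto (fun z => z ^ (p + 1) * b z) (𝓝[≠] 0) (𝓝 0) := by
    simpa using ((continuousAt_pow 0 (p + 1)).fun_mul hb).tendsto.mono_left nhdsWithin_le_nhds
  exact ha0 (tendsto_nhds_unique hlim hzero)

theorem eventually_sum_comp_const_mul_eq {ι : Type*} (s : Finset ι) (c w : ι → 𝕜)
    (hc : ∀ j, c j ≠ 0) {φ v : 𝕜 → 𝕜} {n : ℤ} (hφ : ∀ᶠ z in 𝓝[≠] 0, φ z = z ^ n * v z) :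
    ∀ᶠ z in 𝓝[≠] 0, ∑ j ∈ s, φ (c j * z) * w j = z ^ n * ∑ j ∈ s, c j ^ n * v (c j * z) * w j := by
  have hφc : ∀ᶠ z in 𝓝[≠] 0, ∀ j ∈ s, φ (c j * z) = (c j * z) ^ n * v (c j * z) :=
    (eventually_all_finset s).2 fun j _ => (tendsto_const_mul_nhdsNE_zero (hc j)).eventually hφ
  filter_upwards [hφc] with z hz
  rw [mul_sum]
  refine sum_congr rfl fun j hj => ?_
  rw [hz j hj, mul_zpow]
  ring

theorem zpow_pow_mul_sq_eq {z : 𝕜} (hz : z ≠ 0) (c : 𝕜) {d : ℕ} (hd : 1 ≤ d) (m : ℤ) :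
    (z ^ d) ^ m * (c * z ^ (d - 1)) ^ 2 = z ^ (d * m + 2 * ((d : ℤ) - 1)) * c ^ 2 := by
  obtain ⟨e, rfl⟩ := Nat.exists_eq_add_of_le' hd
  have h2 : 2 * (((e + 1 : ℕ) : ℤ) - 1) = ((2 * e : ℕ) : ℤ) := by push_cast; ring
  rw [zpow_add₀ hz, zpow_mul, zpow_natCast, h2, zpow_natCast, Nat.add_sub_cancel]
  ring

end PuncturedOrder

theorem pushforward_order_estimate_general
    (d : ℕ) (hd : 1 ≤ d)
    (φ : ℂ → ℂ) (n : ℤ)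
    (v : ℂ → ℂ) (hv : AnalyticAt ℂ v 0)
    (hφ : ∀ᶠ z in 𝓝[≠] (0 : ℂ), φ z = z ^ n * v z)
    (Q : ℂ → ℂ) (m : ℤ)
    (u : ℂ → ℂ) (hu : AnalyticAt ℂ u 0) (hu0 : u 0 ≠ 0)
    (hQ : ∀ᶠ w in 𝓝[≠] (0 : ℂ), Q w = w ^ m * u w)
    (hpush : ∀ᶠ z in 𝓝[≠] (0 : ℂ),
      Q (z ^ d) * ((d : ℂ) * z ^ (d - 1)) ^ 2 =
        ∑ j ∈ Finset.range d,
          φ (Complex.exp (2 * Real.pi * Complex.I * j / d) * z) *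
            Complex.exp (2 * Real.pi * Complex.I * j / d) ^ 2) :
    (2 + n : ℤ) ≤ d * (2 + m) := by
  set ζ : ℕ → ℂ := fun j => Complex.exp (2 * Real.pi * Complex.I * j / d)
  have hd0 : d ≠ 0 := by omega
  have hu_pow_cont : ContinuousAt (fun z : ℂ => u (z ^ d) * (d : ℂ) ^ 2) 0 :=
    (hu.continuousAt.comp_of_eq (continuousAt_pow 0 d) (zero_pow hd0)).mul continuousAt_const
  have hsum_cont : ContinuousAt (fun z => ∑ j ∈ range d, ζ j ^ n * v (ζ j * z) * ζ j ^ 2) 0 :=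
    tendsto_finsetSum _ fun j _ => (continuousAt_const.mul (hv.continuousAt.comp_of_eq
      (continuous_const_mul (ζ j)).continuousAt (mul_zero _))).mul continuousAt_const
  have hpulled : ∀ᶠ z in 𝓝[≠] (0 : ℂ), z ^ (d * m + 2 * ((d : ℤ) - 1)) * (u (z ^ d) * (d : ℂ) ^ 2)
      = z ^ n * ∑ j ∈ range d, ζ j ^ n * v (ζ j * z) * ζ j ^ 2 := by
    filter_upwards [hpush, (tendsto_pow_nhdsNE_zero hd0).eventually hQ,
      eventually_sum_comp_const_mul_eq (range d) ζ (fun j => ζ j ^ 2)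
        (fun j => Complex.exp_ne_zero _) hφ, self_mem_nhdsWithin] with z hpush hQ hφ hz
    rw [← hφ, ← hpush, hQ, mul_right_comm, zpow_pow_mul_sq_eq hz _ hd]
    ring
  have hu_pow_ne_zero : u (0 ^ d) * (d : ℂ) ^ 2 ≠ 0 := by
    rw [zero_pow hd0]
    exact mul_ne_zero hu0 (pow_ne_zero 2 (Nat.cast_ne_zero.2 hd0))
  linarith [le_of_eventually_zpow_mul_eq hu_pow_cont hu_pow_ne_zero hsum_cont hpulled]

/-- Let `f(z) = z^d` be the model of a degree-`d` covering of punctured disks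
ramifying at `0`, let `q = φ(dz)²` be meromorphic at `0` of order `n`, and let
`f_*q = Q(dw)²` be its pushforward, characterized by
`f*(f_*q) = Σ_h h*q` over the deck transformations `h(z) = e^{2πij/d}z`.
If `f_*q` is meromorphic of order `m` at `0`, then `2 + m ≥ (2 + n)/d`. -/
theorem pushforward_order_estimate
    (d : ℕ) (hd : 1 ≤ d)
    (φ : ℂ → ℂ) (n : ℤ)
    (v : ℂ → ℂ) (hv : AnalyticAt ℂ v 0) (hv0 : v 0 ≠ 0)
    (hφ : ∀ᶠ z in 𝓝[≠] (0 : ℂ), φ z = z ^ n * v z)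
    (Q : ℂ → ℂ) (m : ℤ)
    (u : ℂ → ℂ) (hu : AnalyticAt ℂ u 0) (hu0 : u 0 ≠ 0)
    (hQ : ∀ᶠ w in 𝓝[≠] (0 : ℂ), Q w = w ^ m * u w)
    (hpush : ∀ᶠ z in 𝓝[≠] (0 : ℂ),
      Q (z ^ d) * ((d : ℂ) * z ^ (d - 1)) ^ 2 =
        ∑ j ∈ Finset.range d,
          φ (Complex.exp (2 * Real.pi * Complex.I * j / d) * z) *
            Complex.exp (2 * Real.pi * Complex.I * j / d) ^ 2) :
    (2 + n : ℤ) ≤ d * (2 + m) :=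
  pushforward_order_estimate_general d hd φ n v hv hφ Q m u hu hu0 hQ hpush
end

section
/- Let f: U → V be a covering map of punctured disks U = Û∖{x}, V = V̂∖{y} ramifying at x, let q be a quadratic differential meromorphic on Û, and let ϑ be a meromorphic vector field on V. Then residue(f_*q ⊗ ϑ, y) = residue(q ⊗ f*ϑ, x). -/
/-!
Pull the integral of `Q ψ dw` over `|w| = r^d` back along `z ↦ z^d`: as the circle `|z| = r` winds
`d` times around `|w| = r^d`, it becomes `1/d` times the integral over `|z| = r` of
`d z^{d-1} Q(z^d) ψ(z^d)`. By the defining identity of the pushforward, this integrand is the sum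
over the deck transformations `z ↦ ω z` (`ω^d = 1`) of the pullbacks of `φ(z) ψ(z^d) / (d z^{d-1})`,
and each of these `d` pullbacks has the same integral, rotations preserving the circle. Cauchy's
theorem on the punctured disk lets the radius `r^d` be replaced by `r`.
-/

open Filter Topology Finset Complex Metric Set Function
open scoped Real

theorem Filter.Eventually.exists_forall_ball_diff {α : Type*} [PseudoMetricSpace α] {p : α → Prop}
    {c : α} (h : ∀ᶠ z in 𝓝[≠] c, p z) {δ : ℝ} (hδ : 0 < δ) :
    ∃ ε > 0, ε ≤ δ ∧ ∀ z ∈ ball c ε \ {c}, p z := by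
  obtain ⟨ε, hε, hp⟩ := nhdsWithin_basis_ball.eventually_iff.1 h
  exact ⟨min ε δ, lt_min hε hδ, min_le_right _ _,
    fun z hz => hp ⟨ball_subset_ball (min_le_left _ _) hz.1, hz.2⟩⟩

theorem sphere_subset_ball_diff {α : Type*} [PseudoMetricSpace α] {c : α} {r ε : ℝ} (hr : 0 < r)
    (hrε : r < ε) : sphere c r ⊆ ball c ε \ {c} := fun _ hz =>
  ⟨sphere_subset_ball hrε hz, ne_of_mem_sphere hz hr.ne'⟩

theorem mapsTo_pow_ball_diff {𝕜 : Type*} [NormedDivisionRing 𝕜] {ε : ℝ} (hε : ε ≤ 1) {n : ℕ}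
    (hn : n ≠ 0) : MapsTo (· ^ n) (ball (0 : 𝕜) ε \ {0}) (ball 0 ε \ {0}) := fun z ⟨hzε, hz0⟩ => by
  rw [mem_ball_zero_iff] at hzε
  refine ⟨?_, pow_ne_zero n hz0⟩
  rw [mem_ball_zero_iff, norm_pow]
  exact (pow_le_of_le_one (norm_nonneg z) (hzε.le.trans hε) hn).trans_lt hzε

theorem exp_two_pi_mul_I_mul_div_pow_eq_one {n : ℕ} (hn : n ≠ 0) (k : ℕ) :
    exp (2 * π * I * k / n) ^ n = 1 := by
  rw [← Complex.exp_nat_mul, ← exp_nat_mul_two_pi_mul_I k]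
  congr 1
  field_simp

section CircleIntegral

variable {E : Type*} [NormedAddCommGroup E] [NormedSpace ℂ E]

theorem circleIntegral_eq_of_differentiableOn_ball_diff {f : ℂ → E} {c : ℂ} {ε r R : ℝ}
    (hf : DifferentiableOn ℂ f (ball c ε \ {c})) (hr : 0 < r) (hrR : r ≤ R) (hR : R < ε) :
    (∮ z in C(c, R), f z) = ∮ z in C(c, r), f z := by
  have hsub : closedBall c R \ ball c r ⊆ ball c ε \ {c} := fun z ⟨hzR, hzr⟩ =>
    ⟨closedBall_subset_ball hR hzR, fun hzc => hzr (hzc ▸ mem_ball_self hr)⟩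
  refine circleIntegral_eq_of_differentiable_on_annulus_off_countable hr hrR countable_empty
    (hf.continuousOn.mono hsub) fun z hz => hf.differentiableAt ?_
  exact (isOpen_ball.sdiff isClosed_singleton).mem_nhds
    (hsub ⟨ball_subset_closedBall hz.1.1, fun h => hz.1.2 (ball_subset_closedBall h)⟩)

theorem circleIntegral_smul_comp_mul_left (g : ℂ → E) {a : ℂ} (ha : ‖a‖ = 1) (R : ℝ) :
    (∮ z in C(0, R), a • g (a * z)) = ∮ z in C(0, R), g z := by
  have hrot (θ : ℝ) : a * circleMap 0 R θ = circleMap 0 R (θ + a.arg) := by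
    have ha' : circleMap 0 1 a.arg = a := by
      simpa [circleMap_zero, ha] using norm_mul_exp_arg_mul_I a
    rw [← ha', circleMap_zero_mul, one_mul, add_comm, ha']
  set K : ℝ → E := fun θ => deriv (circleMap 0 R) θ • g (circleMap 0 R θ)
  have hK : Periodic K (2 * π) := fun θ => by
    simp only [K, deriv_circleMap, periodic_circleMap 0 R θ]
  calc (∮ z in C(0, R), a • g (a * z))
      = ∫ θ in (0 : ℝ)..2 * π, K (θ + a.arg) := by
        refine intervalIntegral.integral_congr fun θ _ => ?_
        simp only [K, deriv_circleMap, smul_smul, ← hrot]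
        ring_nf
    _ = ∫ θ in a.arg..a.arg + 2 * π, K θ := by
        rw [intervalIntegral.integral_comp_add_right, zero_add, add_comm]
    _ = ∮ z in C(0, R), g z := by
        rw [hK.intervalIntegral_add_eq a.arg 0, zero_add]
        rfl

theorem circleIntegral_sum_smul_comp_mul_left {ι : Type*} (s : Finset ι) {a : ι → ℂ}
    (ha : ∀ i ∈ s, ‖a i‖ = 1) {g : ℂ → E} {R : ℝ} (hg : ContinuousOn g (sphere 0 |R|)) :
    (∮ z in C(0, R), ∑ i ∈ s, a i • g (a i * z)) = #s • ∮ z in C(0, R), g z := by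
  have hint : ∀ i ∈ s, CircleIntegrable (fun z => a i • g (a i * z)) 0 R := fun i hi =>
    ContinuousOn.circleIntegrable' <| continuousOn_const.smul <|
      hg.comp (by fun_prop) fun z hz => by simpa [ha i hi] using hz
  rw [circleIntegral.integral_fun_sum hint, ← sum_const]
  exact sum_congr rfl fun i hi => circleIntegral_smul_comp_mul_left g (ha i hi) R

theorem circleIntegral_smul_comp_pow (f : ℂ → E) {n : ℕ} (hn : n ≠ 0) (R : ℝ)
    (hf : ContinuousOn f (sphere 0 |R ^ n|)) :
    (∮ z in C(0, R), (n * z ^ (n - 1)) • f (z ^ n)) = n • ∮ w in C(0, R ^ n), f w := by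
  set K : ℝ → E := fun θ => deriv (circleMap 0 (R ^ n)) θ • f (circleMap 0 (R ^ n) θ)
  have hK : Periodic K (2 * π) := fun θ => by
    simp only [K, deriv_circleMap, periodic_circleMap 0 (R ^ n) θ]
  have hKc : Continuous K := by
    simp only [K, deriv_circleMap]
    exact ((continuous_circleMap 0 _).mul continuous_const).smul <|
      hf.comp_continuous (continuous_circleMap 0 _) (circleMap_mem_sphere' 0 _)
  have hn' : (n : ℝ) ≠ 0 := Nat.cast_ne_zero.mpr hn
  calc (∮ z in C(0, R), (n * z ^ (n - 1)) • f (z ^ n))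
      = ∫ θ in (0 : ℝ)..2 * π, (n : ℂ) • K (n * θ) := by
        refine intervalIntegral.integral_congr fun θ _ => ?_
        obtain ⟨m, rfl⟩ : ∃ m, n = m + 1 := ⟨n - 1, by omega⟩
        simp only [K, deriv_circleMap, smul_smul, ← circleMap_zero_pow, Nat.add_sub_cancel]
        ring_nf
    _ = (n : ℂ) • ((n : ℝ)⁻¹ • ∫ θ in (0 : ℝ)..0 + (n : ℤ) • (2 * π), K θ) := by
        rw [intervalIntegral.integral_smul, intervalIntegral.integral_comp_mul_left K hn']
        simp
    _ = n • ∮ w in C(0, R ^ n), f w := by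
        rw [hK.intervalIntegral_add_zsmul_eq n 0 fun _ _ => hKc.intervalIntegrable _ _, zero_add,
          ← Complex.coe_smul, ← Int.cast_smul_eq_zsmul ℂ, ← Nat.cast_smul_eq_nsmul ℂ, smul_smul,
          smul_smul]
        congr 1
        push_cast
        field_simp

theorem circleIntegral_pow_radius_eq_of_eqOn_sum {ι : Type*} (s : Finset ι) {a : ι → ℂ}
    (ha : ∀ i ∈ s, ‖a i‖ = 1) {n : ℕ} (hn : n ≠ 0) (hs : #s = n) {F G : ℂ → E} {R : ℝ}
    (hR : 0 ≤ R) (hF : ContinuousOn F (sphere 0 (R ^ n))) (hG : ContinuousOn G (sphere 0 R))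
    (hFG : EqOn (fun z : ℂ => ((n : ℂ) * z ^ (n - 1)) • F (z ^ n))
      (fun z => ∑ i ∈ s, a i • G (a i * z)) (sphere 0 R)) :
    (∮ w in C(0, R ^ n), F w) = ∮ z in C(0, R), G z := by
  have hpull := circleIntegral_smul_comp_pow F hn R (by rwa [abs_of_nonneg (pow_nonneg hR n)])
  rw [circleIntegral.integral_congr hR hFG,
    circleIntegral_sum_smul_comp_mul_left s ha (by rwa [abs_of_nonneg hR]), hs,
    ← Nat.cast_smul_eq_nsmul ℂ, ← Nat.cast_smul_eq_nsmul ℂ] at hpull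
  exact smul_right_injective E (Nat.cast_ne_zero.2 hn) hpull.symm

end CircleIntegral

/-- In the coordinate `z`, this is `f*(f_*q ⊗ ϑ) = Σ_h h*(q ⊗ f*ϑ)` for `f(z) = z^n`, the sum
running over the deck transformations `h(z) = ω z`. -/
theorem pullback_pairing_eq_sum_deck {ι : Type*} (s : Finset ι) {ω : ι → ℂ} {n : ℕ}
    (hn : n ≠ 0) (hω : ∀ i ∈ s, ω i ^ n = 1) (φ ψ Q : ℂ → ℂ) {z : ℂ} (hz : z ≠ 0)
    (hQ : Q (z ^ n) * (n * z ^ (n - 1)) ^ 2 = ∑ i ∈ s, φ (ω i * z) * ω i ^ 2) :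
    (n * z ^ (n - 1)) * (Q (z ^ n) * ψ (z ^ n)) =
      ∑ i ∈ s, ω i * (φ (ω i * z) * ψ ((ω i * z) ^ n) / (n * (ω i * z) ^ (n - 1))) := by
  obtain ⟨m, rfl⟩ : ∃ m, n = m + 1 := ⟨n - 1, by omega⟩
  have hterm : ∀ i ∈ s, ω i * (φ (ω i * z) * ψ ((ω i * z) ^ (m + 1)) / (↑(m + 1) * (ω i * z) ^ m))
      = φ (ω i * z) * ω i ^ 2 * (ψ (z ^ (m + 1)) / (↑(m + 1) * z ^ m)) := fun i hi => by
    have hωi : ω i ≠ 0 := by rintro h; simpa [h] using hω i hi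
    rw [mul_pow, hω i hi, one_mul, mul_pow]
    field_simp
    linear_combination -(φ (ω i * z) * ψ (z ^ (m + 1))) * hω i hi
  rw [Nat.add_sub_cancel] at hQ ⊢
  rw [sum_congr rfl hterm, ← sum_mul, ← hQ]
  field_simp

/-- Let `f(z) = z^d` be the model of a covering of punctured disks ramifying at
`0`, `q = φ(dz)²` meromorphic at `0`, `ϑ = ψ d/dw` a meromorphic vector field
downstairs, and `f_*q = Q(dw)²` the pushforward, characterized by
`f*(f_*q) = Σ_h h*q` over deck transformations `h(z) = e^{2πij/d}z`. Then
`residue(f_*q ⊗ ϑ, 0) = residue(q ⊗ f*ϑ, 0)`, where the residues are computed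
by contour integrals: `∮ Q(w)ψ(w) dw = ∮ φ(z)·ψ(z^d)/(d z^{d−1}) dz` over all
small circles. -/
theorem residue_pushforward_pairing
    (d : ℕ) (hd : 1 ≤ d)
    (φ ψ Q : ℂ → ℂ)
    (hφ : MeromorphicAt φ 0) (hψ : MeromorphicAt ψ 0) (hQ : MeromorphicAt Q 0)
    (hpush : ∀ᶠ z in 𝓝[≠] (0 : ℂ),
      Q (z ^ d) * ((d : ℂ) * z ^ (d - 1)) ^ 2 =
        ∑ j ∈ Finset.range d,
          φ (Complex.exp (2 * Real.pi * Complex.I * j / d) * z) *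
            Complex.exp (2 * Real.pi * Complex.I * j / d) ^ 2) :
    ∃ r₀ > (0 : ℝ), ∀ r : ℝ, 0 < r → r < r₀ →
      (∮ w in C(0, r), Q w * ψ w) =
        ∮ z in C(0, r), φ z * ψ (z ^ d) / ((d : ℂ) * z ^ (d - 1)) := by
  have hd0 : d ≠ 0 := by omega
  have hω (j : ℕ) : exp (2 * π * I * j / d) ^ d = 1 := exp_two_pi_mul_I_mul_div_pow_eq_one hd0 j
  obtain ⟨ε, hε, hε1, hU⟩ := ((hφ.eventually_analyticAt.and
    (hψ.eventually_analyticAt.and hQ.eventually_analyticAt)).and hpush).exists_forall_ball_diff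
    one_pos
  have hφU : DifferentiableOn ℂ φ (ball 0 ε \ {0}) := fun z hz =>
    (hU z hz).1.1.differentiableWithinAt
  have hψU : DifferentiableOn ℂ ψ (ball 0 ε \ {0}) := fun z hz =>
    (hU z hz).1.2.1.differentiableWithinAt
  have hF : DifferentiableOn ℂ (fun w => Q w * ψ w) (ball 0 ε \ {0}) := fun z hz =>
    ((hU z hz).1.2.2.mul (hU z hz).1.2.1).differentiableWithinAt
  have hG : DifferentiableOn ℂ (fun z => φ z * ψ (z ^ d) / (d * z ^ (d - 1))) (ball 0 ε \ {0}) :=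
    (hφU.mul (hψU.comp (differentiableOn_pow d) (mapsTo_pow_ball_diff hε1 hd0))).div (by fun_prop)
      fun z hz => mul_ne_zero (Nat.cast_ne_zero.2 hd0) (pow_ne_zero _ hz.2)
  refine ⟨ε, hε, fun r hr hrε => ?_⟩
  have hrd : r ^ d ≤ r := pow_le_of_le_one hr.le (hrε.le.trans hε1) hd0
  rw [circleIntegral_eq_of_differentiableOn_ball_diff hF (pow_pos hr d) hrd hrε]
  refine circleIntegral_pow_radius_eq_of_eqOn_sum (range d)
    (fun j _ => norm_eq_one_of_pow_eq_one (hω j) hd0) hd0 (card_range d) hr.le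
    (hF.continuousOn.mono (sphere_subset_ball_diff (pow_pos hr d) (hrd.trans_lt hrε)))
    (hG.continuousOn.mono (sphere_subset_ball_diff hr hrε)) fun z hz => ?_
  exact pullback_pairing_eq_sum_deck _ hd0 (fun j _ => hω j) φ ψ Q (ne_of_mem_sphere hz hr.ne')
    (hU z (sphere_subset_ball_diff hr hrε hz)).2
end

section
/- Let f be a holomorphic self-map of a Riemann surface with a fixed point x, let ζ be a local coordinate at x with ζ∘f = ζ + O(ζ³), let q be a quadratic differential meromorphic near x with q − f*q holomorphic near x, and let τ be a vector field holomorphic near x with f a local isomorphism near x. Then residue(q ⊗ f*τ, x) = residue(q ⊗ τ, x). -/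
/-!
Since `q - f*q` is holomorphic, `q ⊗ f*τ = (q - f*q) ⊗ f*τ + f*(q ⊗ τ)` differs from the
pullback `f*(q ⊗ τ)` by a 1-form that is holomorphic at `0` (as `f'(0) = 1`). So it suffices that
pulling back a meromorphic 1-form `F(w) dw` by a local biholomorphism fixing `0` preserves its
residue. Peeling off Laurent terms reduces this to `F = w ^ m`: for `m ≠ -1` both forms are exact,
and for `m = -1` the pullback `g'/g` differs from `1/z` by the holomorphic `v'/v`, where `g = z v`.
-/

open Filter Topology Set Metric

lemma eventually_nhdsGT_forall_mem_sphere {P : ℂ → Prop} (h : ∀ᶠ z in 𝓝[≠] (0 : ℂ), P z) :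
    ∀ᶠ r in 𝓝[>] (0 : ℝ), ∀ z ∈ sphere (0 : ℂ) r, P z := by
  obtain ⟨ε, hε, hP⟩ := Metric.eventually_nhds_iff_ball.mp (eventually_nhdsWithin_iff.mp h)
  filter_upwards [Ioo_mem_nhdsGT hε] with r ⟨hr, hrε⟩ z hz
  have hz' : ‖z‖ = r := by simpa using hz
  exact hP z (by simpa [hz'] using hrε) (by simpa [← norm_pos_iff, hz'] using hr)

lemma eventually_nhdsGT_forall_mem_closedBall {P : ℂ → Prop} (h : ∀ᶠ z in 𝓝 (0 : ℂ), P z) :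
    ∀ᶠ r in 𝓝[>] (0 : ℝ), ∀ z ∈ closedBall (0 : ℂ) r, P z := by
  obtain ⟨ε, hε, hP⟩ := Metric.eventually_nhds_iff_ball.mp h
  filter_upwards [Ioo_mem_nhdsGT hε] with r ⟨_, hrε⟩ z hz
  exact hP z (closedBall_subset_ball hrε hz)

lemma MeromorphicAt.eventually_circleIntegrable {F : ℂ → ℂ} (hF : MeromorphicAt F 0) :
    ∀ᶠ r in 𝓝[>] (0 : ℝ), CircleIntegrable F 0 r := by
  filter_upwards [eventually_nhdsGT_forall_mem_sphere hF.eventually_analyticAt,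
    self_mem_nhdsWithin] with r hF hr
  exact ContinuousOn.circleIntegrable (le_of_lt hr) fun z hz ↦
    (hF z hz).continuousAt.continuousWithinAt

lemma AnalyticAt.eventually_circleIntegral_eq_zero {F : ℂ → ℂ} (hF : AnalyticAt ℂ F 0) :
    ∀ᶠ r in 𝓝[>] (0 : ℝ), (∮ z in C(0, r), F z) = 0 := by
  filter_upwards [eventually_nhdsGT_forall_mem_closedBall hF.eventually_analyticAt,
    self_mem_nhdsWithin] with r hF hr
  exact DiffContOnCl.circleIntegral_eq_zero (le_of_lt hr)
    ⟨fun z hz ↦ (hF z (ball_subset_closedBall hz)).differentiableAt.differentiableWithinAt,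
     fun z hz ↦ (hF z (closure_ball_subset_closedBall hz)).continuousAt.continuousWithinAt⟩

lemma Filter.EventuallyEq.eventually_circleIntegral_eq {F₁ F₂ : ℂ → ℂ}
    (h : F₁ =ᶠ[𝓝[≠] 0] F₂) :
    ∀ᶠ r in 𝓝[>] (0 : ℝ), (∮ z in C(0, r), F₁ z) = ∮ z in C(0, r), F₂ z := by
  filter_upwards [eventually_nhdsGT_forall_mem_sphere h, self_mem_nhdsWithin] with r h hr
  exact circleIntegral.integral_congr (le_of_lt hr) h

lemma MeromorphicAt.eventually_circleIntegral_add {F₁ F₂ : ℂ → ℂ} (h₁ : MeromorphicAt F₁ 0)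
    (h₂ : MeromorphicAt F₂ 0) :
    ∀ᶠ r in 𝓝[>] (0 : ℝ),
      (∮ z in C(0, r), (F₁ z + F₂ z)) = (∮ z in C(0, r), F₁ z) + ∮ z in C(0, r), F₂ z := by
  filter_upwards [h₁.eventually_circleIntegrable, h₂.eventually_circleIntegrable] with r h₁ h₂
  exact circleIntegral.integral_add h₁ h₂

lemma AnalyticAt.dslope {𝕜 E : Type*} [NontriviallyNormedField 𝕜] [NormedAddCommGroup E]
    [NormedSpace 𝕜 E] {f : 𝕜 → E} {a : 𝕜} (hf : AnalyticAt 𝕜 f a) :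
    AnalyticAt 𝕜 (dslope f a) a :=
  let ⟨_, hp⟩ := hf
  ⟨_, hp.has_fpower_series_dslope_fslope⟩

lemma MeromorphicAt.comp_mul_deriv {F g : ℂ → ℂ} (hF : MeromorphicAt F 0)
    (hg : AnalyticAt ℂ g 0) (hg0 : g 0 = 0) : MeromorphicAt (fun z ↦ F (g z) * deriv g z) 0 :=
  ((hg0 ▸ hF).comp_analyticAt hg).mul hg.deriv.meromorphicAt

lemma DifferentiableAt.tendsto_nhdsNE_zero {g : ℂ → ℂ} (hg : DifferentiableAt ℂ g 0)
    (hg0 : g 0 = 0) (hg' : deriv g 0 ≠ 0) : Tendsto g (𝓝[≠] 0) (𝓝[≠] 0) := by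
  simpa [hg0] using hg.hasDerivAt.tendsto_nhdsNE hg'

/-- The residue at `0` of the 1-form `F(w) dw` equals that of its pullback `F(g z) g'(z) dz`,
residues being `(2πi)⁻¹` times integrals over all small enough circles. -/
def PreservesResidue (g F : ℂ → ℂ) : Prop :=
  ∀ᶠ r in 𝓝[>] (0 : ℝ), (∮ z in C(0, r), F (g z) * deriv g z) = ∮ z in C(0, r), F z

namespace PreservesResidue

variable {g : ℂ → ℂ}

lemma const_mul {F : ℂ → ℂ} (h : PreservesResidue g F) (c : ℂ) :
    PreservesResidue g fun w ↦ c * F w := by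
  filter_upwards [h] with r h
  simp only [mul_assoc, circleIntegral.integral_const_mul, h]

lemma add (hg : AnalyticAt ℂ g 0) (hg0 : g 0 = 0) {F₁ F₂ : ℂ → ℂ} (hF₁ : MeromorphicAt F₁ 0)
    (hF₂ : MeromorphicAt F₂ 0) (h₁ : PreservesResidue g F₁) (h₂ : PreservesResidue g F₂) :
    PreservesResidue g fun w ↦ F₁ w + F₂ w := by
  filter_upwards [h₁, h₂, hF₁.eventually_circleIntegral_add hF₂,
    (hF₁.comp_mul_deriv hg hg0).eventually_circleIntegral_add (hF₂.comp_mul_deriv hg hg0)]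
    with r h₁ h₂ hsum hsum_pull
  simp only [add_mul, hsum, hsum_pull, h₁, h₂]

lemma congr (hg : AnalyticAt ℂ g 0) (hg0 : g 0 = 0) (hg' : deriv g 0 ≠ 0) {F₁ F₂ : ℂ → ℂ}
    (h : PreservesResidue g F₁) (hF : F₁ =ᶠ[𝓝[≠] 0] F₂) : PreservesResidue g F₂ := by
  have hpull : (fun z ↦ F₁ (g z) * deriv g z) =ᶠ[𝓝[≠] 0] fun z ↦ F₂ (g z) * deriv g z := by
    filter_upwards [(hg.differentiableAt.tendsto_nhdsNE_zero hg0 hg').eventually hF] with z hz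
    rw [hz]
  filter_upwards [h, hF.eventually_circleIntegral_eq, hpull.eventually_circleIntegral_eq]
    with r h h₁ h₂
  rw [← h₂, h, h₁]

lemma of_analyticAt (hg : AnalyticAt ℂ g 0) (hg0 : g 0 = 0) {G : ℂ → ℂ}
    (hG : AnalyticAt ℂ G 0) : PreservesResidue g G := by
  have hpull : AnalyticAt ℂ (fun z ↦ G (g z) * deriv g z) 0 :=
    (hG.comp_of_eq hg hg0).mul hg.deriv
  filter_upwards [hpull.eventually_circleIntegral_eq_zero, hG.eventually_circleIntegral_eq_zero]
    with r h₁ h₂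
  rw [h₁, h₂]

lemma zpow_of_ne_neg_one (hg : AnalyticAt ℂ g 0) (hg0 : g 0 = 0) (hg' : deriv g 0 ≠ 0) {m : ℤ}
    (hm : m ≠ -1) : PreservesResidue g fun w ↦ w ^ m := by
  have hm' : (m + 1 : ℂ) ≠ 0 := by
    exact_mod_cast fun h ↦ hm (eq_neg_of_add_eq_zero_left h)
  have hprim : ∀ᶠ z in 𝓝[≠] 0, HasDerivAt (fun z ↦ g z ^ (m + 1) / (m + 1))
      (g z ^ m * deriv g z) z := by
    filter_upwards [hg.differentiableAt.tendsto_nhdsNE_zero hg0 hg' self_mem_nhdsWithin,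
      nhdsWithin_le_nhds hg.eventually_analyticAt] with z hgz hgz'
    refine (((hasDerivAt_zpow (m + 1) (g z) (Or.inl hgz)).comp z
      hgz'.differentiableAt.hasDerivAt).div_const (m + 1 : ℂ)).congr_deriv ?_
    push_cast
    rw [add_sub_cancel_right]
    field_simp
  filter_upwards [eventually_nhdsGT_forall_mem_sphere hprim, self_mem_nhdsWithin] with r h hr
  rw [circleIntegral.integral_eq_zero_of_hasDerivWithinAt (le_of_lt hr)
    fun z hz ↦ (h z hz).hasDerivWithinAt]
  simpa using (circleIntegral.integral_sub_zpow_of_ne hm 0 0 r).symm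

lemma inv (hg : AnalyticAt ℂ g 0) (hg0 : g 0 = 0) (hg' : deriv g 0 ≠ 0) :
    PreservesResidue g fun w ↦ w⁻¹ := by
  set v := dslope g 0
  have hv : AnalyticAt ℂ v 0 := hg.dslope
  have hv0 : v 0 ≠ 0 := by simpa [v, dslope_same] using hg'
  have hgv : g = fun z ↦ z * v z := funext fun z ↦ by
    simpa [hg0] using (sub_smul_dslope g 0 z).symm
  have hlog : (fun z ↦ (g z)⁻¹ * deriv g z) =ᶠ[𝓝[≠] 0] fun z ↦ z⁻¹ + deriv v z / v z := by
    filter_upwards [self_mem_nhdsWithin, nhdsWithin_le_nhds hv.eventually_analyticAt,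
      nhdsWithin_le_nhds (hv.continuousAt.eventually_ne hv0)] with z hz hvz hvz0
    have hderiv : deriv g z = v z + z * deriv v z := by
      rw [hgv]
      simpa using ((hasDerivAt_id' z).fun_mul hvz.differentiableAt.hasDerivAt).deriv
    have hz : z ≠ 0 := hz
    rw [hderiv, hgv]
    field_simp
  have hvlog : AnalyticAt ℂ (fun z ↦ deriv v z / v z) 0 := hv.deriv.div hv hv0
  filter_upwards [hlog.eventually_circleIntegral_eq,
    (show MeromorphicAt (fun z : ℂ ↦ z⁻¹) 0 by fun_prop).eventually_circleIntegral_add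
      hvlog.meromorphicAt,
    hvlog.eventually_circleIntegral_eq_zero] with r hpull hsum hzero
  rw [hpull, hsum, hzero, add_zero]

lemma zpow (hg : AnalyticAt ℂ g 0) (hg0 : g 0 = 0) (hg' : deriv g 0 ≠ 0) (m : ℤ) :
    PreservesResidue g fun w ↦ w ^ m := by
  rcases eq_or_ne m (-1) with rfl | hm
  · simpa only [zpow_neg_one] using inv hg hg0 hg'
  · exact zpow_of_ne_neg_one hg hg0 hg' hm

end PreservesResidue

lemma MeromorphicAt.preservesResidue {g : ℂ → ℂ} (hg : AnalyticAt ℂ g 0) (hg0 : g 0 = 0)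
    (hg' : deriv g 0 ≠ 0) {F : ℂ → ℂ} (hF : MeromorphicAt F 0) : PreservesResidue g F := by
  suffices key : ∀ (n : ℕ) (G : ℂ → ℂ), AnalyticAt ℂ G 0 →
      PreservesResidue g fun w ↦ w ^ (-(n : ℤ)) * G w by
    obtain ⟨n, hn⟩ := hF
    refine (key n _ hn).congr hg hg0 hg' ?_
    filter_upwards [self_mem_nhdsWithin] with w hw
    have hw : w ≠ 0 := hw
    simp [zpow_neg, hw]
  intro n
  induction n with
  | zero =>
    intro G hG
    simpa using PreservesResidue.of_analyticAt hg hg0 hG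
  | succ n ih =>
    intro G hG
    have hsplit : (fun w ↦ G 0 * w ^ (-((n + 1 : ℕ) : ℤ)) + w ^ (-(n : ℤ)) * dslope G 0 w)
        =ᶠ[𝓝[≠] 0] fun w ↦ w ^ (-((n + 1 : ℕ) : ℤ)) * G w := by
      filter_upwards [self_mem_nhdsWithin] with w hw
      have hw : w ≠ 0 := hw
      have hG : G w = G 0 + w * dslope G 0 w := by
        simpa [sub_eq_iff_eq_add'] using (sub_smul_dslope G 0 w).symm
      rw [hG]
      simp only [zpow_neg, zpow_natCast]
      field_simp
      ring
    refine (((PreservesResidue.zpow hg hg0 hg' _).const_mul (G 0)).add hg hg0 (by fun_prop)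
      ?_ (ih _ hG.dslope)).congr hg hg0 hg' hsplit
    exact (MeromorphicAt.zpow (by fun_prop) _).mul hG.dslope.meromorphicAt

lemma hasDerivAt_one_of_eventuallyEq_add_cube_mul {f u : ℂ → ℂ} (hu : DifferentiableAt ℂ u 0)
    (hexp : ∀ᶠ ζ in 𝓝 (0 : ℂ), f ζ = ζ + ζ ^ 3 * u ζ) : HasDerivAt f 1 0 := by
  have hmodel : HasDerivAt (fun ζ ↦ ζ + ζ ^ 3 * u ζ) 1 0 := by
    simpa using (hasDerivAt_id' 0).fun_add ((hasDerivAt_pow 3 0).fun_mul hu.hasDerivAt)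
  exact hmodel.congr_of_eventuallyEq hexp

theorem residue_invariance_at_parabolic_general (f : ℂ → ℂ)
    (u : ℂ → ℂ) (hu : AnalyticAt ℂ u 0)
    (hexp : ∀ᶠ ζ in 𝓝 (0 : ℂ), f ζ = ζ + ζ ^ 3 * u ζ)
    (φ : ℂ → ℂ) (hφ : MeromorphicAt φ 0)
    (h : ℂ → ℂ) (hh : AnalyticAt ℂ h 0)
    (hinv : ∀ᶠ z in 𝓝[≠] (0 : ℂ), φ z - φ (f z) * (deriv f z) ^ 2 = h z)
    (ψ : ℂ → ℂ) (hψ : AnalyticAt ℂ ψ 0) :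
    ∃ r₀ > (0 : ℝ), ∀ r : ℝ, 0 < r → r < r₀ →
      (∮ z in C(0, r), φ z * ψ (f z) / deriv f z) =
        ∮ z in C(0, r), φ z * ψ z := by
  have hf : AnalyticAt ℂ f 0 :=
    (analyticAt_id.add ((analyticAt_id.pow 3).mul hu)).congr (hexp.mono fun _ h ↦ h.symm)
  have hf0 : f 0 = 0 := by simpa using hexp.self_of_nhds
  have hf' : deriv f 0 ≠ 0 := by
    simp [(hasDerivAt_one_of_eventuallyEq_add_cube_mul hu.differentiableAt hexp).deriv]
  have hsplit : (fun z ↦ h z * ψ (f z) / deriv f z + φ (f z) * ψ (f z) * deriv f z)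
      =ᶠ[𝓝[≠] 0] fun z ↦ φ z * ψ (f z) / deriv f z := by
    filter_upwards [hinv, nhdsWithin_le_nhds (hf.deriv.continuousAt.eventually_ne hf')]
      with z hz hz'
    rw [← hz]
    field_simp
    ring
  have hhol : AnalyticAt ℂ (fun z ↦ h z * ψ (f z) / deriv f z) 0 :=
    (hh.mul (hψ.comp_of_eq hf hf0)).div hf.deriv hf'
  have hq : MeromorphicAt (fun w ↦ φ w * ψ w) 0 := hφ.mul hψ.meromorphicAt
  have hres : ∀ᶠ r in 𝓝[>] (0 : ℝ), (∮ z in C(0, r), φ z * ψ (f z) / deriv f z) =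
      ∮ z in C(0, r), φ z * ψ z := by
    filter_upwards [hsplit.eventually_circleIntegral_eq,
      hhol.meromorphicAt.eventually_circleIntegral_add (hq.comp_mul_deriv hf hf0),
      hhol.eventually_circleIntegral_eq_zero, hq.preservesResidue hf hf0 hf']
      with r hsplit hadd hzero hpull
    rw [← hsplit, hadd, hzero, zero_add, hpull]
  obtain ⟨r₀, hr₀, hr⟩ := (nhdsGT_basis 0).eventually_iff.mp hres
  exact ⟨r₀, hr₀, fun r hr0 hrr₀ ↦ hr ⟨hr0, hrr₀⟩⟩

/-- Let `f` fix `0` with `ζ∘f = ζ + O(ζ³)` in a local coordinate, let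
`q = φ(dζ)²` be meromorphic at `0` with `q − f*q` holomorphic at `0`, and let
`τ = ψ d/dζ` be a holomorphic vector field. Then
`residue(q ⊗ f*τ, 0) = residue(q ⊗ τ, 0)`, where `q ⊗ f*τ` has coefficient
`φ(z)·ψ(f(z))/f'(z)` and `q ⊗ τ` has coefficient `φ(z)·ψ(z)`, the residues
being computed as contour integrals over small circles. -/
theorem residue_invariance_at_parabolic (f : ℂ → ℂ) (hf : AnalyticAt ℂ f 0)
    (u : ℂ → ℂ) (hu : AnalyticAt ℂ u 0)
    (hexp : ∀ᶠ ζ in 𝓝 (0 : ℂ), f ζ = ζ + ζ ^ 3 * u ζ)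
    (φ : ℂ → ℂ) (hφ : MeromorphicAt φ 0)
    (h : ℂ → ℂ) (hh : AnalyticAt ℂ h 0)
    (hinv : ∀ᶠ z in 𝓝[≠] (0 : ℂ), φ z - φ (f z) * (deriv f z) ^ 2 = h z)
    (ψ : ℂ → ℂ) (hψ : AnalyticAt ℂ ψ 0) :
    ∃ r₀ > (0 : ℝ), ∀ r : ℝ, 0 < r → r < r₀ →
      (∮ z in C(0, r), φ z * ψ (f z) / deriv f z) =
        ∮ z in C(0, r), φ z * ψ z :=
  residue_invariance_at_parabolic_general f u hu hexp φ hφ h hh hinv ψ hψ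
end

section
/- Let f: X → Y be holomorphic with two distinct simple critical points c⁺, c⁻ whose critical values f(c⁺), f(c⁻) are distinct and not critical points. Set Z := {c⁺, c⁻, f(c⁺), f(c⁻)}. Suppose ξ₁, ξ₂ are vector fields holomorphic near Z such that both ϑ + ξ₁ − f*ξ₁ and ϑ + ξ₂ − f*ξ₂ are holomorphic and vanish at c⁺ and c⁻, for some fixed vector field ϑ meromorphic near {c⁺,c⁻} with at worst simple poles there. Then ξ₁ = ξ₂ on Z. -/
/-!
Put `g = ξ₁ - ξ₂`; subtracting the two hypotheses cancels `ϑ`, so `g - f*g → 0` at each simple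
critical point `c`. Multiplying by `f' → 0` gives `g (f c) = 0`. Then `g ∘ f` vanishes to order
two at `c` while `f'` vanishes only to order one, so `f*g = (g ∘ f) / f' → 0`, whence `g c = 0`.
-/

open Filter Topology

section SimpleCriticalPoint

variable {𝕜 : Type*} [NontriviallyNormedField 𝕜] {f g : 𝕜 → 𝕜} {c : 𝕜}

lemma tendsto_comp_div_deriv_of_simple_critical (hf : DifferentiableAt 𝕜 f c)
    (hf' : DifferentiableAt 𝕜 (deriv f) c) (hcrit : deriv f c = 0)
    (hsimple : deriv (deriv f) c ≠ 0) (hg : DifferentiableAt 𝕜 g (f c)) (hgfc : g (f c) = 0) :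
    Tendsto (fun z => g (f z) / deriv f z) (𝓝[≠] c) (𝓝 0) := by
  -- `dslope` factors `z - c` out of both `g (f z)` and `deriv f z`, leaving continuous quotients.
  have hgf : Tendsto (fun z => dslope g (f c) (f z)) (𝓝[≠] c) (𝓝 (deriv g (f c))) := by
    rw [← dslope_same]
    exact ((continuousAt_dslope_same.2 hg).comp hf.continuousAt).continuousWithinAt.tendsto
  have hfc : Tendsto (dslope f c) (𝓝[≠] c) (𝓝 0) := by
    rw [← hcrit, ← dslope_same]
    exact (continuousAt_dslope_same.2 hf).continuousWithinAt.tendsto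
  have hf'c : Tendsto (dslope (deriv f) c) (𝓝[≠] c) (𝓝 (deriv (deriv f) c)) := by
    rw [← dslope_same]
    exact (continuousAt_dslope_same.2 hf').continuousWithinAt.tendsto
  have hlim := (hgf.mul hfc).div hf'c hsimple
  rw [mul_zero, zero_div] at hlim
  refine hlim.congr' ?_
  filter_upwards [self_mem_nhdsWithin] with z (hz : z ≠ c)
  have hgfz : g (f z) = (z - c) * (dslope g (f c) (f z) * dslope f c z) := by
    rw [← mul_assoc, mul_comm (z - c), mul_assoc, ← smul_eq_mul (z - c), sub_smul_dslope,
      mul_comm, ← smul_eq_mul, sub_smul_dslope, hgfc, sub_zero]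
  have hf'z : deriv f z = (z - c) * dslope (deriv f) c z := by
    rw [← smul_eq_mul, sub_smul_dslope, hcrit, sub_zero]
  rw [hgfz, hf'z, mul_div_mul_left _ _ (sub_ne_zero.2 hz)]
  rfl

variable (hf : DifferentiableAt 𝕜 f c) (hf' : DifferentiableAt 𝕜 (deriv f) c)
  (hcrit : deriv f c = 0) (hsimple : deriv (deriv f) c ≠ 0)
  (htend : Tendsto (fun z => g z - g (f z) / deriv f z) (𝓝[≠] c) (𝓝 0))
include hf hf' hcrit hsimple htend

lemma comp_eq_zero_of_tendsto_sub_div_deriv (hg : ContinuousAt g c)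
    (hgf : ContinuousAt g (f c)) : g (f c) = 0 := by
  have hf'c : Tendsto (deriv f) (𝓝[≠] c) (𝓝 0) :=
    hcrit ▸ hf'.continuousAt.continuousWithinAt.tendsto
  have hlim := (hg.continuousWithinAt.tendsto.sub htend).mul hf'c
  rw [mul_zero] at hlim
  refine tendsto_nhds_unique ((hgf.tendsto.comp hf.continuousAt).mono_left nhdsWithin_le_nhds)
    (hlim.congr' ?_)
  filter_upwards [hf'.hasDerivAt.eventually_ne hsimple] with z hz
  rw [sub_sub_cancel, div_mul_cancel₀ _ hz]
  rfl

lemma eq_zero_of_tendsto_sub_div_deriv (hg : ContinuousAt g c)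
    (hgf : DifferentiableAt 𝕜 g (f c)) : g c = 0 ∧ g (f c) = 0 := by
  have hgfc := comp_eq_zero_of_tendsto_sub_div_deriv hf hf' hcrit hsimple htend hg hgf.continuousAt
  have hlim := hg.continuousWithinAt.tendsto.sub
    (tendsto_comp_div_deriv_of_simple_critical hf hf' hcrit hsimple hgf hgfc)
  rw [sub_zero] at hlim
  exact ⟨tendsto_nhds_unique hlim htend, hgfc⟩

end SimpleCriticalPoint

theorem guiding_vector_field_unique_general
    (f : ℂ → ℂ) (cp cm : ℂ)
    (hfan : ∀ z ∈ ({cp, cm, f cp, f cm} : Set ℂ), AnalyticAt ℂ f z)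
    (hcrit_p : deriv f cp = 0) (hcrit_m : deriv f cm = 0)
    (hsimple_p : deriv (deriv f) cp ≠ 0) (hsimple_m : deriv (deriv f) cm ≠ 0)
    (ϑ : ℂ → ℂ)
    (ξ₁ ξ₂ : ℂ → ℂ)
    (hξ₁ : ∀ z ∈ ({cp, cm, f cp, f cm} : Set ℂ), AnalyticAt ℂ ξ₁ z)
    (hξ₂ : ∀ z ∈ ({cp, cm, f cp, f cm} : Set ℂ), AnalyticAt ℂ ξ₂ z)
    (h₁ : ∀ c ∈ ({cp, cm} : Set ℂ),
      Tendsto (fun z => ϑ z + ξ₁ z - ξ₁ (f z) / deriv f z) (𝓝[≠] c) (𝓝 0))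
    (h₂ : ∀ c ∈ ({cp, cm} : Set ℂ),
      Tendsto (fun z => ϑ z + ξ₂ z - ξ₂ (f z) / deriv f z) (𝓝[≠] c) (𝓝 0)) :
    ∀ z ∈ ({cp, cm, f cp, f cm} : Set ℂ), ξ₁ z = ξ₂ z := by
  have hZ : ∀ c ∈ ({cp, cm} : Set ℂ), deriv f c = 0 → deriv (deriv f) c ≠ 0 →
      (ξ₁ - ξ₂) c = 0 ∧ (ξ₁ - ξ₂) (f c) = 0 := by
    intro c hc hcrit hsimple
    have hcZ : c ∈ ({cp, cm, f cp, f cm} : Set ℂ) := by obtain rfl | rfl := hc <;> simp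
    have hfcZ : f c ∈ ({cp, cm, f cp, f cm} : Set ℂ) := by obtain rfl | rfl := hc <;> simp
    have hdiff : Tendsto (fun z => (ξ₁ - ξ₂) z - (ξ₁ - ξ₂) (f z) / deriv f z) (𝓝[≠] c) (𝓝 0) := by
      have hsub := (h₁ c hc).sub (h₂ c hc)
      rw [sub_zero] at hsub
      convert hsub using 2 with z
      simp only [Pi.sub_apply]
      ring
    exact eq_zero_of_tendsto_sub_div_deriv (hfan c hcZ).differentiableAt
      (hfan c hcZ).deriv.differentiableAt hcrit hsimple hdiff
      ((hξ₁ c hcZ).sub (hξ₂ c hcZ)).continuousAt ((hξ₁ _ hfcZ).sub (hξ₂ _ hfcZ)).differentiableAt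
  obtain ⟨hp, hfp⟩ := hZ cp (by simp) hcrit_p hsimple_p
  obtain ⟨hm, hfm⟩ := hZ cm (by simp) hcrit_m hsimple_m
  intro z hz
  rw [← sub_eq_zero, ← Pi.sub_apply]
  obtain rfl | rfl | rfl | rfl := hz
  exacts [hp, hm, hfp, hfm]

/-- Uniqueness of guiding vector fields: let `f` be holomorphic with two
distinct simple critical points `c⁺, c⁻` whose critical values are distinct and
not critical, and set `Z = {c⁺, c⁻, f(c⁺), f(c⁻)}`. If `ξ₁, ξ₂` are vector
fields holomorphic near `Z` such that `ϑ + ξᵢ − f*ξᵢ` is holomorphic and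
vanishes at `c⁺` and `c⁻` (for a fixed `ϑ` with at worst simple poles at
`c⁺, c⁻`), then `ξ₁ = ξ₂` on `Z`. Here `f*ξ` has coefficient `ξ(f z)/f'(z)`. -/
theorem guiding_vector_field_unique
    (f : ℂ → ℂ) (cp cm : ℂ) (hcc : cp ≠ cm)
    (hfan : ∀ z ∈ ({cp, cm, f cp, f cm} : Set ℂ), AnalyticAt ℂ f z)
    (hcrit_p : deriv f cp = 0) (hcrit_m : deriv f cm = 0)
    (hsimple_p : deriv (deriv f) cp ≠ 0) (hsimple_m : deriv (deriv f) cm ≠ 0)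
    (hval : f cp ≠ f cm)
    (hval_p : deriv f (f cp) ≠ 0) (hval_m : deriv f (f cm) ≠ 0)
    (hvaldisj : ∀ c ∈ ({cp, cm} : Set ℂ), f cp ≠ c ∧ f cm ≠ c)
    (ϑ : ℂ → ℂ)
    (hϑ : ∀ c ∈ ({cp, cm} : Set ℂ), MeromorphicAt ϑ c ∧
      AnalyticAt ℂ (fun z => (z - c) * ϑ z) c)
    (ξ₁ ξ₂ : ℂ → ℂ)
    (hξ₁ : ∀ z ∈ ({cp, cm, f cp, f cm} : Set ℂ), AnalyticAt ℂ ξ₁ z)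
    (hξ₂ : ∀ z ∈ ({cp, cm, f cp, f cm} : Set ℂ), AnalyticAt ℂ ξ₂ z)
    (h₁ : ∀ c ∈ ({cp, cm} : Set ℂ),
      Tendsto (fun z => ϑ z + ξ₁ z - ξ₁ (f z) / deriv f z) (𝓝[≠] c) (𝓝 0))
    (h₂ : ∀ c ∈ ({cp, cm} : Set ℂ),
      Tendsto (fun z => ϑ z + ξ₂ z - ξ₂ (f z) / deriv f z) (𝓝[≠] c) (𝓝 0)) :
    ∀ z ∈ ({cp, cm, f cp, f cm} : Set ℂ), ξ₁ z = ξ₂ z :=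
  guiding_vector_field_unique_general f cp cm hfan hcrit_p hcrit_m hsimple_p hsimple_m ϑ ξ₁ ξ₂ hξ₁
    hξ₂ h₁ h₂
end
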